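/- arXiv:1201.5035 — 2 statements merged into one kernel-verified Lean document; each statement's English description precedes it below -/
import Mathlib

section
/- Let G and H be locally compact Hausdorff topological groups acting freely and properly by automorphisms on the left and right, respectively, of a topological groupoid Γ, with commuting actions. Let x, y ∈ Γ satisfy G·s(x) = G·s(y). Then there is a unique t ∈ G with s(x) = t·s(y), and the element ζ = (x(t·y⁻¹)·H, t) of the semidirect-product groupoid (Γ/H)⋊G is the unique element of (Γ/H)⋊G such that ζ·y = x for the left action of (Γ/H)⋊G on the space Γ given by (zH, t)·w = z(t·w) whenever s(z) = r(t·w). -/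
open MeasureTheory Filter Topology

/-- A topological groupoid: a space `Γ` with a set of units, continuous open range and
source maps onto the units, a (partially meaningful, totalized) continuous multiplication
defined for composable pairs, and a continuous inversion. -/
structure TopGroupoid (Γ : Type*) [TopologicalSpace Γ] where
  unit : Set Γ
  rng : Γ → Γ
  src : Γ → Γ
  mul : Γ → Γ → Γ
  inv : Γ → Γ
  rng_mem : ∀ x, rng x ∈ unit
  src_mem : ∀ x, src x ∈ unit
  rng_unit : ∀ u ∈ unit, rng u = u
  src_unit : ∀ u ∈ unit, src u = u
  continuous_rng : Continuous rng
  continuous_src : Continuous src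
  open_rng : ∀ U : Set Γ, IsOpen U → ∃ V : Set Γ, IsOpen V ∧ rng '' U = V ∩ unit
  open_src : ∀ U : Set Γ, IsOpen U → ∃ V : Set Γ, IsOpen V ∧ src '' U = V ∩ unit
  continuous_mul : ContinuousOn (fun p : Γ × Γ => mul p.1 p.2) {p : Γ × Γ | src p.1 = rng p.2}
  continuous_inv : Continuous inv
  rng_mul : ∀ x y, src x = rng y → rng (mul x y) = rng x
  src_mul : ∀ x y, src x = rng y → src (mul x y) = src y
  mul_assoc' : ∀ x y z, src x = rng y → src y = rng z → mul (mul x y) z = mul x (mul y z)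
  rng_mul_self : ∀ x, mul (rng x) x = x
  mul_src_self : ∀ x, mul x (src x) = x
  inv_inv' : ∀ x, inv (inv x) = x
  src_inv : ∀ x, src (inv x) = rng x
  rng_inv : ∀ x, rng (inv x) = src x
  inv_mul' : ∀ x, mul (inv x) x = src x
  mul_inv' : ∀ x, mul x (inv x) = rng x

section Actions

variable {Γ : Type*} [TopologicalSpace Γ]

/-- A (continuous) right action of a group `H` on a topological groupoid by automorphisms. -/
structure GroupRightAction (𝒢 : TopGroupoid Γ) (H : Type*) [TopologicalSpace H] [Group H] where
  act : Γ → H → Γ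
  continuous_act : Continuous fun p : Γ × H => act p.1 p.2
  act_one : ∀ x, act x 1 = x
  act_mul : ∀ x (h k : H), act (act x h) k = act x (h * k)
  unit_act : ∀ u ∈ 𝒢.unit, ∀ h : H, act u h ∈ 𝒢.unit
  src_act : ∀ x h, 𝒢.src (act x h) = act (𝒢.src x) h
  rng_act : ∀ x h, 𝒢.rng (act x h) = act (𝒢.rng x) h
  mul_act : ∀ x y h, 𝒢.src x = 𝒢.rng y → 𝒢.mul (act x h) (act y h) = act (𝒢.mul x y) h
  inv_act : ∀ x h, 𝒢.inv (act x h) = act (𝒢.inv x) h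

namespace GroupRightAction

variable {𝒢 : TopGroupoid Γ} {H : Type*} [TopologicalSpace H] [Group H]

/-- The action is free. -/
def Free (A : GroupRightAction 𝒢 H) : Prop := ∀ x h, A.act x h = x → h = 1

/-- The action is proper: `(x,h) ↦ (x·h, x)` has compact preimages of compact sets. -/
def Proper (A : GroupRightAction 𝒢 H) : Prop :=
  ∀ K : Set (Γ × Γ), IsCompact K → IsCompact {p : Γ × H | (A.act p.1 p.2, p.1) ∈ K}

/-- The orbit equivalence relation. -/
def setoid (A : GroupRightAction 𝒢 H) : Setoid Γ where
  r x y := ∃ h : H, A.act x h = y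
  iseqv := by
    refine ⟨fun x => ⟨1, A.act_one x⟩, ?_, ?_⟩
    · rintro x y ⟨h, rfl⟩
      exact ⟨h⁻¹, by rw [A.act_mul]; simp [A.act_one]⟩
    · rintro x y z ⟨h, rfl⟩ ⟨k, rfl⟩
      exact ⟨h * k, (A.act_mul x h k).symm⟩

end GroupRightAction

/-- A (continuous) left action of a group `G` on a topological groupoid by automorphisms. -/
structure GroupLeftAction (𝒢 : TopGroupoid Γ) (G : Type*) [TopologicalSpace G] [Group G] where
  act : G → Γ → Γ
  continuous_act : Continuous fun p : G × Γ => act p.1 p.2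
  one_act : ∀ x, act 1 x = x
  act_act : ∀ (t u : G) (x : Γ), act t (act u x) = act (t * u) x
  unit_act : ∀ u ∈ 𝒢.unit, ∀ t : G, act t u ∈ 𝒢.unit
  src_act : ∀ t x, 𝒢.src (act t x) = act t (𝒢.src x)
  rng_act : ∀ t x, 𝒢.rng (act t x) = act t (𝒢.rng x)
  mul_act : ∀ t x y, 𝒢.src x = 𝒢.rng y → 𝒢.mul (act t x) (act t y) = act t (𝒢.mul x y)
  inv_act : ∀ t x, 𝒢.inv (act t x) = act t (𝒢.inv x)

namespace GroupLeftAction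

variable {𝒢 : TopGroupoid Γ} {G : Type*} [TopologicalSpace G] [Group G]

/-- The action is free. -/
def Free (A : GroupLeftAction 𝒢 G) : Prop := ∀ t x, A.act t x = x → t = 1

/-- The action is proper: `(t,x) ↦ (t·x, x)` has compact preimages of compact sets. -/
def Proper (A : GroupLeftAction 𝒢 G) : Prop :=
  ∀ K : Set (Γ × Γ), IsCompact K → IsCompact {p : G × Γ | (A.act p.1 p.2, p.2) ∈ K}

/-- The orbit equivalence relation. -/
def setoid (A : GroupLeftAction 𝒢 G) : Setoid Γ where
  r x y := ∃ t : G, A.act t x = y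
  iseqv := by
    refine ⟨fun x => ⟨1, A.one_act x⟩, ?_, ?_⟩
    · rintro x y ⟨t, rfl⟩
      exact ⟨t⁻¹, by rw [A.act_act]; simp [A.one_act]⟩
    · rintro x y z ⟨t, rfl⟩ ⟨u, rfl⟩
      exact ⟨u * t, (A.act_act u t x).symm⟩

end GroupLeftAction

/-- A left action of a topological groupoid `𝒢` on a space `Ω`, with fibre map `ρ`. -/
structure GroupoidLeftAction (𝒢 : TopGroupoid Γ) (Ω : Type*) [TopologicalSpace Ω] where
  ρ : Ω → Γ
  act : Γ → Ω → Ω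
  ρ_mem : ∀ u, ρ u ∈ 𝒢.unit
  continuous_ρ : Continuous ρ
  ρ_surj : ∀ v ∈ 𝒢.unit, ∃ u, ρ u = v
  open_ρ : ∀ U : Set Ω, IsOpen U → ∃ V : Set Γ, IsOpen V ∧ ρ '' U = V ∩ 𝒢.unit
  continuous_act : ContinuousOn (fun p : Γ × Ω => act p.1 p.2) {p : Γ × Ω | 𝒢.src p.1 = ρ p.2}
  ρ_act : ∀ x u, 𝒢.src x = ρ u → ρ (act x u) = 𝒢.rng x
  unit_act : ∀ u, act (ρ u) u = u
  act_act : ∀ x y u, 𝒢.src y = ρ u → 𝒢.src x = 𝒢.rng y → act x (act y u) = act (𝒢.mul x y) u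

namespace GroupoidLeftAction

variable {𝒢 : TopGroupoid Γ} {Ω : Type*} [TopologicalSpace Ω]

/-- The action is free. -/
def Free (A : GroupoidLeftAction 𝒢 Ω) : Prop :=
  ∀ x u, 𝒢.src x = A.ρ u → A.act x u = u → x ∈ 𝒢.unit

/-- The action is proper: `(x,u) ↦ (x·u, u)` on the composable set has compact preimages of
compact sets. -/
def Proper (A : GroupoidLeftAction 𝒢 Ω) : Prop :=
  ∀ K : Set (Ω × Ω), IsCompact K →
    IsCompact {p : Γ × Ω | 𝒢.src p.1 = A.ρ p.2 ∧ (A.act p.1 p.2, p.2) ∈ K}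

/-- The orbit equivalence relation on `Ω`. -/
def setoid (A : GroupoidLeftAction 𝒢 Ω) : Setoid Ω where
  r u v := ∃ x, 𝒢.src x = A.ρ u ∧ A.act x u = v
  iseqv := by
    constructor
    · exact fun u => ⟨A.ρ u, 𝒢.src_unit _ (A.ρ_mem u), A.unit_act u⟩
    · rintro u v ⟨x, hx, rfl⟩
      refine ⟨𝒢.inv x, ?_, ?_⟩
      · rw [𝒢.src_inv, A.ρ_act x u hx]
      · rw [A.act_act _ x u hx (𝒢.src_inv x), 𝒢.inv_mul', hx, A.unit_act]
    · rintro u v w ⟨x, hx, rfl⟩ ⟨y, hy, rfl⟩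
      have hyr : 𝒢.src y = 𝒢.rng x := by rw [hy, A.ρ_act x u hx]
      refine ⟨𝒢.mul y x, ?_, ?_⟩
      · rw [𝒢.src_mul y x hyr, hx]
      · rw [← A.act_act y x u hx hyr]

end GroupoidLeftAction

/-- A right action of a topological groupoid `𝒢` on a space `Ω`, with fibre map `σ`. -/
structure GroupoidRightAction (𝒢 : TopGroupoid Γ) (Ω : Type*) [TopologicalSpace Ω] where
  σ : Ω → Γ
  act : Ω → Γ → Ω
  σ_mem : ∀ u, σ u ∈ 𝒢.unit
  continuous_σ : Continuous σ
  σ_surj : ∀ v ∈ 𝒢.unit, ∃ u, σ u = v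
  open_σ : ∀ U : Set Ω, IsOpen U → ∃ V : Set Γ, IsOpen V ∧ σ '' U = V ∩ 𝒢.unit
  continuous_act : ContinuousOn (fun p : Ω × Γ => act p.1 p.2) {p : Ω × Γ | σ p.1 = 𝒢.rng p.2}
  σ_act : ∀ u x, σ u = 𝒢.rng x → σ (act u x) = 𝒢.src x
  unit_act : ∀ u, act u (σ u) = u
  act_act : ∀ u x y, σ u = 𝒢.rng x → 𝒢.src x = 𝒢.rng y → act (act u x) y = act u (𝒢.mul x y)

namespace GroupoidRightAction

variable {𝒢 : TopGroupoid Γ} {Ω : Type*} [TopologicalSpace Ω]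

/-- The action is free. -/
def Free (A : GroupoidRightAction 𝒢 Ω) : Prop :=
  ∀ u x, A.σ u = 𝒢.rng x → A.act u x = u → x ∈ 𝒢.unit

/-- The action is proper. -/
def Proper (A : GroupoidRightAction 𝒢 Ω) : Prop :=
  ∀ K : Set (Ω × Ω), IsCompact K →
    IsCompact {p : Ω × Γ | A.σ p.1 = 𝒢.rng p.2 ∧ (A.act p.1 p.2, p.1) ∈ K}

/-- The orbit equivalence relation on `Ω`. -/
def setoid (A : GroupoidRightAction 𝒢 Ω) : Setoid Ω where
  r u v := ∃ x, A.σ u = 𝒢.rng x ∧ A.act u x = v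
  iseqv := by
    constructor
    · exact fun u => ⟨A.σ u, (𝒢.rng_unit _ (A.σ_mem u)).symm, A.unit_act u⟩
    · rintro u v ⟨x, hx, rfl⟩
      refine ⟨𝒢.inv x, ?_, ?_⟩
      · rw [𝒢.rng_inv, A.σ_act u x hx]
      · rw [A.act_act u x _ hx (𝒢.rng_inv x).symm, 𝒢.mul_inv', ← hx, A.unit_act]
    · rintro u v w ⟨x, hx, rfl⟩ ⟨y, hy, rfl⟩
      have hxy : 𝒢.src x = 𝒢.rng y := by rw [← A.σ_act u x hx, hy]
      refine ⟨𝒢.mul x y, ?_, ?_⟩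
      · rw [𝒢.rng_mul x y hxy, hx]
      · rw [A.act_act u x y hx hxy]

end GroupoidRightAction

end Actions

/-- A left Haar system on a topological groupoid: a family of Radon measures indexed by the
units, with support `r⁻¹(u)`, continuous in `u`, and left invariant. -/
def IsHaarSystem {Γ : Type*} [TopologicalSpace Γ] [MeasurableSpace Γ]
    (𝒢 : TopGroupoid Γ) (lam : Γ → Measure Γ) : Prop :=
  (∀ u ∈ 𝒢.unit, ∀ K : Set Γ, IsCompact K → lam u K < ⊤) ∧
  (∀ u ∈ 𝒢.unit, lam u {x | 𝒢.rng x ≠ u} = 0) ∧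
  (∀ u ∈ 𝒢.unit, ∀ V : Set Γ, IsOpen V → (V ∩ 𝒢.rng ⁻¹' {u}).Nonempty → 0 < lam u V) ∧
  (∀ f : Γ → ℝ, Continuous f → HasCompactSupport f →
    ContinuousOn (fun u => ∫ x, f x ∂(lam u)) 𝒢.unit) ∧
  (∀ x : Γ, ∀ f : Γ → ℝ, Continuous f → HasCompactSupport f →
    ∫ y, f (𝒢.mul x y) ∂(lam (𝒢.src x)) = ∫ y, f y ∂(lam (𝒢.rng x)))

/-! The element `t` is unique because `G` acts freely. Since `(⟦z⟧, t)·y = z (t·y)`,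
acting on `y` is right multiplication by `t·y` in `Γ`, which can be cancelled by `(t·y)⁻¹`.
The one subtlety is that a representative `z` of a class in `Γ/H` need not be composable
with `t·y`; because the two actions commute, it can be moved along its `H`-orbit until
`s(z) = t·r(y)`. -/

namespace TopGroupoid

variable {Γ : Type*} [TopologicalSpace Γ] (𝒢 : TopGroupoid Γ)

theorem src_mul_inv {x w : Γ} (h : 𝒢.src x = 𝒢.src w) :
    𝒢.src (𝒢.mul x (𝒢.inv w)) = 𝒢.rng w := by
  rw [𝒢.src_mul _ _ (h.trans (𝒢.rng_inv w).symm), 𝒢.src_inv]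

theorem mul_inv_mul_cancel {x w : Γ} (h : 𝒢.src x = 𝒢.src w) :
    𝒢.mul (𝒢.mul x (𝒢.inv w)) w = x := by
  rw [𝒢.mul_assoc' _ _ _ (h.trans (𝒢.rng_inv w).symm) (𝒢.src_inv w), 𝒢.inv_mul', ← h,
    𝒢.mul_src_self]

theorem mul_mul_inv_cancel {z w : Γ} (h : 𝒢.src z = 𝒢.rng w) :
    𝒢.mul (𝒢.mul z w) (𝒢.inv w) = z := by
  rw [𝒢.mul_assoc' _ _ _ h (𝒢.rng_inv w).symm, 𝒢.mul_inv', ← h, 𝒢.mul_src_self]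

end TopGroupoid

namespace GroupLeftAction

variable {Γ : Type*} [TopologicalSpace Γ] {𝒢 : TopGroupoid Γ}
  {G : Type*} [TopologicalSpace G] [Group G] (A : GroupLeftAction 𝒢 G)

@[simp]
theorem inv_act_act (t : G) (x : Γ) : A.act t⁻¹ (A.act t x) = x := by
  rw [A.act_act, inv_mul_cancel, A.one_act]

@[simp]
theorem act_inv_act (t : G) (x : Γ) : A.act t (A.act t⁻¹ x) = x := by
  rw [A.act_act, mul_inv_cancel, A.one_act]

variable {A}

theorem Free.eq_of_act_eq (hA : A.Free) {t t' : G} {x : Γ} (h : A.act t x = A.act t' x) :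
    t = t' := by
  refine inv_mul_eq_one.mp (hA _ x ?_)
  rw [← A.act_act, ← h, inv_act_act]

end GroupLeftAction

theorem GroupRightAction.exists_mk_eq_src_eq {Γ : Type*} [TopologicalSpace Γ]
    {𝒢 : TopGroupoid Γ} {G : Type*} [TopologicalSpace G] [Group G]
    {H : Type*} [TopologicalSpace H] [Group H]
    {LA : GroupLeftAction 𝒢 G} {RA : GroupRightAction 𝒢 H}
    (hcomm : ∀ (t : G) (x : Γ) (h : H), LA.act t (RA.act x h) = RA.act (LA.act t x) h)
    {z₀ u : Γ} {s : G}
    (hs : Quotient.mk RA.setoid (LA.act s⁻¹ (𝒢.src z₀)) = Quotient.mk RA.setoid u) :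
    ∃ z, Quotient.mk RA.setoid z = Quotient.mk RA.setoid z₀ ∧ 𝒢.src z = LA.act s u := by
  obtain ⟨h, hh⟩ : ∃ h : H, RA.act (LA.act s⁻¹ (𝒢.src z₀)) h = u := Quotient.exact hs
  refine ⟨RA.act z₀ h, Eq.symm <| Quotient.sound ⟨h, rfl⟩, ?_⟩
  rw [RA.src_act, ← hh, ← hcomm, LA.act_inv_act]

theorem left_inner_product_unique_general
    {Γ G H : Type*} [TopologicalSpace Γ]
    [TopologicalSpace G] [Group G]
    [TopologicalSpace H] [Group H]
    (𝒢 : TopGroupoid Γ)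
    (LA : GroupLeftAction 𝒢 G) (RA : GroupRightAction 𝒢 H)
    (hLfree : LA.Free)
    (hcomm : ∀ (t : G) (x : Γ) (h : H), LA.act t (RA.act x h) = RA.act (LA.act t x) h)
    (SP : TopGroupoid (Quotient RA.setoid × G))
    (hSPsrc : ∀ (x : Γ) (t : G),
      SP.src (Quotient.mk RA.setoid x, t) = (Quotient.mk RA.setoid (LA.act t⁻¹ (𝒢.src x)), 1))
    -- the left action of (Γ/H)⋊G on the space Γ
    (Act : GroupoidLeftAction SP Γ)
    (hρ : ∀ y : Γ, Act.ρ y = (Quotient.mk RA.setoid (𝒢.rng y), 1))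
    (hact : ∀ (z : Γ) (t : G) (w : Γ), 𝒢.src z = 𝒢.rng (LA.act t w) →
      Act.act (Quotient.mk RA.setoid z, t) w = 𝒢.mul z (LA.act t w))
    (x y : Γ) (hxy : ∃ t : G, LA.act t (𝒢.src y) = 𝒢.src x) :
    (∃! t : G, LA.act t (𝒢.src y) = 𝒢.src x) ∧
    ∀ t : G, LA.act t (𝒢.src y) = 𝒢.src x →
      SP.src (Quotient.mk RA.setoid (𝒢.mul x (LA.act t (𝒢.inv y))), t) = Act.ρ y ∧
      Act.act (Quotient.mk RA.setoid (𝒢.mul x (LA.act t (𝒢.inv y))), t) y = x ∧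
      ∀ ζ' : Quotient RA.setoid × G, SP.src ζ' = Act.ρ y → Act.act ζ' y = x →
        ζ' = (Quotient.mk RA.setoid (𝒢.mul x (LA.act t (𝒢.inv y))), t) := by
  have huniq : ∀ {t t' : G}, LA.act t (𝒢.src y) = 𝒢.src x →
      LA.act t' (𝒢.src y) = 𝒢.src x → t = t' :=
    fun ht ht' => hLfree.eq_of_act_eq (ht.trans ht'.symm)
  obtain ⟨t₀, ht₀⟩ := hxy
  refine ⟨⟨t₀, ht₀, fun t ht => huniq ht ht₀⟩, fun t ht => ?_⟩
  have hsrc : 𝒢.src x = 𝒢.src (LA.act t y) := by rw [LA.src_act, ht]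
  have hcomp := 𝒢.src_mul_inv hsrc
  rw [← LA.inv_act]
  refine ⟨?_, ?_, ?_⟩
  · rw [hSPsrc, hρ, hcomp, LA.rng_act, LA.inv_act_act]
  · rw [hact _ _ _ hcomp, 𝒢.mul_inv_mul_cancel hsrc]
  rintro ⟨q, s⟩ hζsrc hζx
  obtain ⟨z₀, rfl⟩ := q.exists_rep
  rw [hSPsrc, hρ] at hζsrc
  obtain ⟨z, hzz₀, hz⟩ := RA.exists_mk_eq_src_eq hcomm (congrArg Prod.fst hζsrc)
  rw [← hzz₀] at hζx ⊢
  have hzcomp : 𝒢.src z = 𝒢.rng (LA.act s y) := by rw [hz, LA.rng_act]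
  rw [hact _ _ _ hzcomp] at hζx
  obtain rfl : s = t := huniq (by rw [← hζx, 𝒢.src_mul _ _ hzcomp, LA.src_act]) ht
  subst hζx
  rw [𝒢.mul_mul_inv_cancel hzcomp]

/-- For commuting free and proper actions of `G` and `H`, with
`G·s(x) = G·s(y)` there is a unique `t ∈ G` with `s(x) = t·s(y)`, and
`ζ = (x(t·y⁻¹)·H, t)` is the unique element of `(Γ/H)⋊G` with `ζ·y = x`. -/
theorem left_inner_product_unique
    {Γ G H : Type*} [TopologicalSpace Γ] [T2Space Γ] [LocallyCompactSpace Γ]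
    [TopologicalSpace G] [Group G] [IsTopologicalGroup G] [T2Space G] [LocallyCompactSpace G]
    [TopologicalSpace H] [Group H] [IsTopologicalGroup H] [T2Space H] [LocallyCompactSpace H]
    (𝒢 : TopGroupoid Γ)
    (LA : GroupLeftAction 𝒢 G) (RA : GroupRightAction 𝒢 H)
    (hLfree : LA.Free) (hLproper : LA.Proper)
    (hRfree : RA.Free) (hRproper : RA.Proper)
    (hcomm : ∀ (t : G) (x : Γ) (h : H), LA.act t (RA.act x h) = RA.act (LA.act t x) h)
    (Q : TopGroupoid (Quotient RA.setoid))
    (hQunit : Q.unit = Quotient.mk RA.setoid '' 𝒢.unit)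
    (hQrng : ∀ x : Γ, Q.rng (Quotient.mk RA.setoid x) = Quotient.mk RA.setoid (𝒢.rng x))
    (hQsrc : ∀ x : Γ, Q.src (Quotient.mk RA.setoid x) = Quotient.mk RA.setoid (𝒢.src x))
    (hQmul : ∀ x y : Γ, 𝒢.src x = 𝒢.rng y →
      Q.mul (Quotient.mk RA.setoid x) (Quotient.mk RA.setoid y)
        = Quotient.mk RA.setoid (𝒢.mul x y))
    (hQinv : ∀ x : Γ, Q.inv (Quotient.mk RA.setoid x) = Quotient.mk RA.setoid (𝒢.inv x))
    (SP : TopGroupoid (Quotient RA.setoid × G))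
    (hSPunit : SP.unit = (Quotient.mk RA.setoid '' 𝒢.unit) ×ˢ ({1} : Set G))
    (hSPrng : ∀ (x : Γ) (t : G),
      SP.rng (Quotient.mk RA.setoid x, t) = (Quotient.mk RA.setoid (𝒢.rng x), 1))
    (hSPsrc : ∀ (x : Γ) (t : G),
      SP.src (Quotient.mk RA.setoid x, t) = (Quotient.mk RA.setoid (LA.act t⁻¹ (𝒢.src x)), 1))
    (hSPmul : ∀ (x y : Γ) (s t : G), 𝒢.src x = 𝒢.rng (LA.act s y) →
      SP.mul (Quotient.mk RA.setoid x, s) (Quotient.mk RA.setoid y, t)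
        = (Quotient.mk RA.setoid (𝒢.mul x (LA.act s y)), s * t))
    (hSPinv : ∀ (x : Γ) (t : G),
      SP.inv (Quotient.mk RA.setoid x, t) = (Quotient.mk RA.setoid (LA.act t⁻¹ (𝒢.inv x)), t⁻¹))
    -- the left action of (Γ/H)⋊G on the space Γ
    (Act : GroupoidLeftAction SP Γ)
    (hρ : ∀ y : Γ, Act.ρ y = (Quotient.mk RA.setoid (𝒢.rng y), 1))
    (hact : ∀ (z : Γ) (t : G) (w : Γ), 𝒢.src z = 𝒢.rng (LA.act t w) →
      Act.act (Quotient.mk RA.setoid z, t) w = 𝒢.mul z (LA.act t w))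
    (x y : Γ) (hxy : ∃ t : G, LA.act t (𝒢.src y) = 𝒢.src x) :
    (∃! t : G, LA.act t (𝒢.src y) = 𝒢.src x) ∧
    ∀ t : G, LA.act t (𝒢.src y) = 𝒢.src x →
      SP.src (Quotient.mk RA.setoid (𝒢.mul x (LA.act t (𝒢.inv y))), t) = Act.ρ y ∧
      Act.act (Quotient.mk RA.setoid (𝒢.mul x (LA.act t (𝒢.inv y))), t) y = x ∧
      ∀ ζ' : Quotient RA.setoid × G, SP.src ζ' = Act.ρ y → Act.act ζ' y = x →
        ζ' = (Quotient.mk RA.setoid (𝒢.mul x (LA.act t (𝒢.inv y))), t) :=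
  left_inner_product_unique_general 𝒢 LA RA hLfree hcomm SP hSPsrc Act hρ hact x y hxy
end

section
/- Let H be a locally compact Hausdorff topological group acting freely and properly on the right of a topological groupoid Γ by automorphisms. Then the orbit space Γ/H (with the quotient topology) is locally compact Hausdorff, and it becomes a topological groupoid with units Γ⁰/H, range r(xH) = r(x)H, source s(xH) = s(x)H, multiplication (xH)(yH) = (xy)H whenever s(x) = r(y), and inversion (xH)⁻¹ = x⁻¹H. In particular: the multiplication is well defined (independent of the choice of representatives z ∈ xH, w ∈ yH with s(z) = r(w)); the induced range and source maps are continuous and open; and the multiplication and inversion on Γ/H are continuous. -/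
open MeasureTheory Filter Topology

/-! Each `h ∈ H` acts by a homeomorphism, so the orbit map `Γ → Γ/H` is open; hence `Γ/H` is
locally compact, and it is Hausdorff because the orbit relation is the range of the proper map
`(x, h) ↦ (x·h, x)`, which is closed. Freeness makes that map injective, so it is a closed
embedding, and the element `h` carrying `x` to `x·h` depends continuously on the pair `(x·h, x)`.
Freeness also makes the product well defined: if `s(x) = r(y)` and `s(x·g) = r(y·k)`, then
`s(x)·g = s(x)·k`, so `g = k` and `(x·g)(y·g) = (xy)·g`. On pairs with `s(x)H = r(y)H` the
product is `((x·h)y)H`, where `h` carries `s(x)` to `r(y)`; this is continuous in `(x, y)`, and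
continuity descends because a product of open quotient maps restricts to a quotient map over any
subset. -/

open Function Set Topology

theorem Topology.IsEmbedding.continuousOn_range_of_leftInverse {α β : Type*}
    [TopologicalSpace α] [TopologicalSpace β] {f : α → β} (hf : IsEmbedding f) {finv : β → α}
    (hleft : LeftInverse finv f) : ContinuousOn finv (range f) := by
  rw [continuousOn_iff_continuous_domRestrict]
  convert hf.toHomeomorph.symm.continuous using 1
  funext ⟨_, x, rfl⟩
  rw [hf.toHomeomorph.eq_symm_apply]
  exact Subtype.ext (congrArg f (hleft x))

theorem IsOpenQuotientMap.continuousOn_iff_comp {X Y Z : Type*} [TopologicalSpace X]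
    [TopologicalSpace Y] [TopologicalSpace Z] {f : X → Y} (hf : IsOpenQuotientMap f) {g : Y → Z}
    {s : Set Y} : ContinuousOn g s ↔ ContinuousOn (g ∘ f) (f ⁻¹' s) := by
  simp only [continuousOn_iff_continuous_domRestrict,
    ← (hf.restrictPreimage s).continuous_comp_iff]
  rfl

namespace GroupRightAction

variable {Γ H : Type*} [TopologicalSpace Γ] [TopologicalSpace H] [Group H] {𝒢 : TopGroupoid Γ}
  (A : GroupRightAction 𝒢 H)

theorem act_act_inv (x : Γ) (h : H) : A.act (A.act x h) h⁻¹ = x := by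
  rw [A.act_mul, mul_inv_cancel, A.act_one]

theorem act_inv_act (x : Γ) (h : H) : A.act (A.act x h⁻¹) h = x := by
  simpa using A.act_act_inv x h⁻¹

def actHomeomorph (h : H) : Γ ≃ₜ Γ where
  toFun x := A.act x h
  invFun x := A.act x h⁻¹
  left_inv x := A.act_act_inv x h
  right_inv x := A.act_inv_act x h
  continuous_toFun := A.continuous_act.comp (continuous_id.prodMk continuous_const)
  continuous_invFun := A.continuous_act.comp (continuous_id.prodMk continuous_const)

theorem mk_eq_mk_iff {x y : Γ} :
    Quotient.mk A.setoid x = Quotient.mk A.setoid y ↔ ∃ h, A.act x h = y :=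
  Quotient.eq

theorem mk_act (x : Γ) (h : H) : Quotient.mk A.setoid (A.act x h) = Quotient.mk A.setoid x :=
  Quotient.sound ⟨h⁻¹, A.act_act_inv x h⟩

theorem isOpenQuotientMap_mk : IsOpenQuotientMap (Quotient.mk A.setoid) := by
  refine ⟨Quotient.mk_surjective, continuous_quotient_mk', fun U hU => ?_⟩
  change IsOpen (Quotient.mk A.setoid ⁻¹' (Quotient.mk A.setoid '' U))
  have hsat : Quotient.mk A.setoid ⁻¹' (Quotient.mk A.setoid '' U)
      = ⋃ h : H, A.actHomeomorph h '' U := by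
    ext x
    simp only [mem_preimage, mem_image, mem_iUnion, mk_eq_mk_iff]
    exact ⟨fun ⟨u, hu, h, hux⟩ => ⟨h, u, hu, hux⟩, fun ⟨h, u, hu, hux⟩ => ⟨u, hu, h, hux⟩⟩
  rw [hsat]
  exact isOpen_iUnion fun h => (A.actHomeomorph h).isOpenMap U hU

def shear (p : Γ × H) : Γ × Γ := (A.act p.1 p.2, p.1)

theorem continuous_shear : Continuous A.shear :=
  A.continuous_act.prodMk continuous_fst

theorem mk_eq_mk_iff_mem_range_shear {x y : Γ} :
    Quotient.mk A.setoid x = Quotient.mk A.setoid y ↔ (y, x) ∈ range A.shear := by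
  simp [mk_eq_mk_iff, shear]

variable {A}

theorem Free.act_injective (hA : A.Free) (x : Γ) : Injective (A.act x) := by
  intro g k hgk
  have hfix : A.act (A.act x g) (g⁻¹ * k) = A.act x g := by
    rw [A.act_mul, mul_inv_cancel_left, hgk]
  exact inv_mul_eq_one.mp (hA _ _ hfix)

theorem Free.shear_injective (hA : A.Free) : Injective A.shear := by
  rintro ⟨x, g⟩ ⟨y, k⟩ hxy
  obtain ⟨hgk, rfl⟩ := Prod.ext_iff.mp hxy
  exact Prod.ext rfl (hA.act_injective x hgk)

theorem Proper.isProperMap_shear [T2Space Γ] [LocallyCompactSpace Γ] (hA : A.Proper) :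
    IsProperMap A.shear :=
  isProperMap_iff_isCompact_preimage.mpr ⟨A.continuous_shear, fun K hK => hA K hK⟩

theorem isClosedEmbedding_shear [T2Space Γ] [LocallyCompactSpace Γ] (hfree : A.Free)
    (hproper : A.Proper) : IsClosedEmbedding A.shear :=
  .of_continuous_injective_isClosedMap A.continuous_shear hfree.shear_injective
    hproper.isProperMap_shear.isClosedMap

theorem Proper.t2Space_quotient [T2Space Γ] [LocallyCompactSpace Γ] (hA : A.Proper) :
    T2Space (Quotient A.setoid) := by
  rw [t2Space_iff_of_isOpenQuotientMap A.isOpenQuotientMap_mk]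
  have hrel : {q : Γ × Γ | Quotient.mk A.setoid q.1 = Quotient.mk A.setoid q.2}
      = Prod.swap ⁻¹' range A.shear := by
    ext ⟨x, y⟩
    exact A.mk_eq_mk_iff_mem_range_shear
  rw [hrel]
  exact hA.isProperMap_shear.isClosedMap.isClosed_range.preimage continuous_swap

variable (A)

open Classical in
noncomputable def translation (p : Γ × Γ) : H :=
  if h : ∃ g, A.act p.2 g = p.1 then h.choose else 1

theorem act_translation {x y : Γ} (h : ∃ g, A.act x g = y) :
    A.act x (A.translation (y, x)) = y := by
  rw [translation, dif_pos h]
  exact h.choose_spec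

variable {A}

theorem Free.translation_shear (hA : A.Free) (p : Γ × H) : A.translation (A.shear p) = p.2 :=
  hA.act_injective p.1 (A.act_translation ⟨p.2, rfl⟩)

theorem continuousOn_translation [T2Space Γ] [LocallyCompactSpace Γ] (hfree : A.Free)
    (hproper : A.Proper) : ContinuousOn A.translation (range A.shear) :=
  continuous_snd.comp_continuousOn
    ((isClosedEmbedding_shear hfree hproper).isEmbedding.continuousOn_range_of_leftInverse
      (finv := fun p => (p.2, A.translation p)) fun p => Prod.ext rfl (hfree.translation_shear p))


variable (A)

section QuotMap

def quotMap (f : Γ → Γ) (hf : ∀ x h, f (A.act x h) = A.act (f x) h) :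
    Quotient A.setoid → Quotient A.setoid :=
  Quotient.map' f fun x _ ⟨h, hxy⟩ => ⟨h, hxy ▸ (hf x h).symm⟩

variable {f : Γ → Γ} (hf : ∀ x h, f (A.act x h) = A.act (f x) h)

theorem continuous_quotMap (hcont : Continuous f) : Continuous (A.quotMap f hf) :=
  hcont.quotient_map' _

theorem exists_isOpen_quotMap_image_eq
    (hopen : ∀ U : Set Γ, IsOpen U → ∃ V : Set Γ, IsOpen V ∧ f '' U = V ∩ 𝒢.unit)
    {U : Set (Quotient A.setoid)} (hU : IsOpen U) :
    ∃ V, IsOpen V ∧ A.quotMap f hf '' U = V ∩ Quotient.mk A.setoid '' 𝒢.unit := by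
  obtain ⟨V, hV, hfV⟩ := hopen _ (hU.preimage A.isOpenQuotientMap_mk.continuous)
  refine ⟨Quotient.mk A.setoid '' V, A.isOpenQuotientMap_mk.isOpenMap V hV, ?_⟩
  ext q
  constructor
  · rintro ⟨a, ha, rfl⟩
    induction a using Quotient.ind with | _ x
    obtain ⟨hxV, hxunit⟩ : f x ∈ V ∩ 𝒢.unit := hfV ▸ mem_image_of_mem f ha
    exact ⟨mem_image_of_mem _ hxV, mem_image_of_mem _ hxunit⟩
  · rintro ⟨⟨v, hv, rfl⟩, u, hu, huv⟩
    obtain ⟨h, rfl⟩ := (A.mk_eq_mk_iff).mp huv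
    obtain ⟨x, hx, hxv⟩ : A.act u h ∈ f '' (Quotient.mk A.setoid ⁻¹' U) :=
      hfV ▸ ⟨hv, A.unit_act u hu h⟩
    exact ⟨_, hx, congrArg (Quotient.mk A.setoid) hxv⟩

end QuotMap

theorem exists_rep_composable_left {x y : Γ}
    (h : Quotient.mk A.setoid (𝒢.src x) = Quotient.mk A.setoid (𝒢.rng y)) :
    ∃ x', Quotient.mk A.setoid x' = Quotient.mk A.setoid x ∧ 𝒢.src x' = 𝒢.rng y := by
  obtain ⟨g, hg⟩ := A.mk_eq_mk_iff.mp h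
  exact ⟨A.act x g, A.mk_act x g, by rw [A.src_act, hg]⟩

theorem exists_rep_composable_right {x y : Γ}
    (h : Quotient.mk A.setoid (𝒢.src x) = Quotient.mk A.setoid (𝒢.rng y)) :
    ∃ y', Quotient.mk A.setoid y' = Quotient.mk A.setoid y ∧ 𝒢.src x = 𝒢.rng y' := by
  obtain ⟨g, hg⟩ := A.mk_eq_mk_iff.mp h
  exact ⟨A.act y g⁻¹, A.mk_act y g⁻¹, by rw [A.rng_act, ← hg, A.act_act_inv]⟩

open Classical in
noncomputable def quotMul (a b : Quotient A.setoid) : Quotient A.setoid :=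
  if h : ∃ p : Γ × Γ, Quotient.mk A.setoid p.1 = a ∧ Quotient.mk A.setoid p.2 = b ∧
      𝒢.src p.1 = 𝒢.rng p.2
  then Quotient.mk A.setoid (𝒢.mul h.choose.1 h.choose.2)
  else a

variable {A}

theorem Free.mk_mul_eq_mk_mul (hA : A.Free) {x y x' y' : Γ}
    (hx : Quotient.mk A.setoid x = Quotient.mk A.setoid x')
    (hy : Quotient.mk A.setoid y = Quotient.mk A.setoid y')
    (hxy : 𝒢.src x = 𝒢.rng y) (hxy' : 𝒢.src x' = 𝒢.rng y') :
    Quotient.mk A.setoid (𝒢.mul x y) = Quotient.mk A.setoid (𝒢.mul x' y') := by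
  obtain ⟨g, rfl⟩ := A.mk_eq_mk_iff.mp hx
  obtain ⟨k, rfl⟩ := A.mk_eq_mk_iff.mp hy
  obtain rfl : g = k := hA.act_injective (𝒢.src x) <| by
    rw [← A.src_act, hxy', A.rng_act, hxy]
  rw [A.mul_act x y g hxy, A.mk_act]

theorem Free.quotMul_mk (hA : A.Free) {x y : Γ} (hxy : 𝒢.src x = 𝒢.rng y) :
    A.quotMul (Quotient.mk A.setoid x) (Quotient.mk A.setoid y)
      = Quotient.mk A.setoid (𝒢.mul x y) := by
  have hex : ∃ p : Γ × Γ, Quotient.mk A.setoid p.1 = Quotient.mk A.setoid x ∧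
      Quotient.mk A.setoid p.2 = Quotient.mk A.setoid y ∧ 𝒢.src p.1 = 𝒢.rng p.2 :=
    ⟨(x, y), rfl, rfl, hxy⟩
  obtain ⟨hx, hy, hc⟩ := hex.choose_spec
  rw [quotMul, dif_pos hex]
  exact hA.mk_mul_eq_mk_mul hx hy hc hxy

theorem continuousOn_quotMul [T2Space Γ] [LocallyCompactSpace Γ] (hfree : A.Free)
    (hproper : A.Proper) :
    ContinuousOn (fun p : Quotient A.setoid × Quotient A.setoid => A.quotMul p.1 p.2)
      {p | A.quotMap 𝒢.src A.src_act p.1 = A.quotMap 𝒢.rng A.rng_act p.2} := by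
  rw [(A.isOpenQuotientMap_mk.prodMap A.isOpenQuotientMap_mk).continuousOn_iff_comp]
  set S : Set (Γ × Γ) :=
    {p | Quotient.mk A.setoid (𝒢.src p.1) = Quotient.mk A.setoid (𝒢.rng p.2)}
  set τ : Γ × Γ → H := fun p => A.translation (𝒢.rng p.2, 𝒢.src p.1)
  have hτ : ContinuousOn τ S :=
    (continuousOn_translation hfree hproper).comp
      ((𝒢.continuous_rng.comp continuous_snd).prodMk
        (𝒢.continuous_src.comp continuous_fst)).continuousOn
      fun p hp => A.mk_eq_mk_iff_mem_range_shear.mp hp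
  have hcomp : ∀ p ∈ S, 𝒢.src (A.act p.1 (τ p)) = 𝒢.rng p.2 := fun p hp => by
    rw [A.src_act]
    exact A.act_translation (A.mk_eq_mk_iff.mp hp)
  have hmul : ContinuousOn (fun p => Quotient.mk A.setoid (𝒢.mul (A.act p.1 (τ p)) p.2)) S :=
    continuous_quotient_mk'.comp_continuousOn (𝒢.continuous_mul.comp
      ((A.continuous_act.comp_continuousOn (continuousOn_fst.prodMk hτ)).prodMk continuousOn_snd)
      hcomp)
  refine hmul.congr fun p hp => ?_
  change A.quotMul (Quotient.mk A.setoid p.1) (Quotient.mk A.setoid p.2) = _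
  rw [← A.mk_act p.1 (τ p), hfree.quotMul_mk (hcomp p hp)]


variable (A)

noncomputable def quotientGroupoid [T2Space Γ] [LocallyCompactSpace Γ] (hfree : A.Free)
    (hproper : A.Proper) : TopGroupoid (Quotient A.setoid) where
  unit := Quotient.mk A.setoid '' 𝒢.unit
  rng := A.quotMap 𝒢.rng A.rng_act
  src := A.quotMap 𝒢.src A.src_act
  mul := A.quotMul
  inv := A.quotMap 𝒢.inv A.inv_act
  rng_mem := Quotient.ind fun x => mem_image_of_mem _ (𝒢.rng_mem x)
  src_mem := Quotient.ind fun x => mem_image_of_mem _ (𝒢.src_mem x)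
  rng_unit := by
    rintro _ ⟨u, hu, rfl⟩
    exact congrArg _ (𝒢.rng_unit u hu)
  src_unit := by
    rintro _ ⟨u, hu, rfl⟩
    exact congrArg _ (𝒢.src_unit u hu)
  continuous_rng := A.continuous_quotMap _ 𝒢.continuous_rng
  continuous_src := A.continuous_quotMap _ 𝒢.continuous_src
  open_rng _ := A.exists_isOpen_quotMap_image_eq _ 𝒢.open_rng
  open_src _ := A.exists_isOpen_quotMap_image_eq _ 𝒢.open_src
  continuous_mul := continuousOn_quotMul hfree hproper
  continuous_inv := A.continuous_quotMap _ 𝒢.continuous_inv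
  rng_mul := Quotient.ind₂ fun x y hxy => by
    obtain ⟨x', hx', hx'y⟩ := A.exists_rep_composable_left hxy
    rw [← hx', hfree.quotMul_mk hx'y]
    exact congrArg (Quotient.mk A.setoid) (𝒢.rng_mul x' y hx'y)
  src_mul := Quotient.ind₂ fun x y hxy => by
    obtain ⟨y', hy', hxy'⟩ := A.exists_rep_composable_right hxy
    rw [← hy', hfree.quotMul_mk hxy']
    exact congrArg (Quotient.mk A.setoid) (𝒢.src_mul x y' hxy')
  mul_assoc' := Quotient.ind₂ fun x y => Quotient.ind fun z hxy hyz => by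
    obtain ⟨x', hx', hx'y⟩ := A.exists_rep_composable_left hxy
    obtain ⟨z', hz', hyz'⟩ := A.exists_rep_composable_right hyz
    rw [← hx', ← hz', hfree.quotMul_mk hx'y, hfree.quotMul_mk hyz',
      hfree.quotMul_mk (by rwa [𝒢.src_mul x' y hx'y]),
      hfree.quotMul_mk (by rwa [𝒢.rng_mul y z' hyz']), 𝒢.mul_assoc' x' y z' hx'y hyz']
  rng_mul_self := Quotient.ind fun x =>
    (hfree.quotMul_mk (𝒢.src_unit _ (𝒢.rng_mem x))).trans (congrArg _ (𝒢.rng_mul_self x))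
  mul_src_self := Quotient.ind fun x =>
    (hfree.quotMul_mk (𝒢.rng_unit _ (𝒢.src_mem x)).symm).trans (congrArg _ (𝒢.mul_src_self x))
  inv_inv' := Quotient.ind fun x => congrArg _ (𝒢.inv_inv' x)
  src_inv := Quotient.ind fun x => congrArg _ (𝒢.src_inv x)
  rng_inv := Quotient.ind fun x => congrArg _ (𝒢.rng_inv x)
  inv_mul' := Quotient.ind fun x => (hfree.quotMul_mk (𝒢.src_inv x)).trans
    (congrArg _ (𝒢.inv_mul' x))
  mul_inv' := Quotient.ind fun x => (hfree.quotMul_mk (𝒢.rng_inv x).symm).trans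
    (congrArg _ (𝒢.mul_inv' x))

end GroupRightAction

theorem quotient_groupoid_exists_general
    {Γ H : Type*} [TopologicalSpace Γ] [T2Space Γ] [LocallyCompactSpace Γ]
    [TopologicalSpace H] [Group H]
    (𝒢 : TopGroupoid Γ) (RA : GroupRightAction 𝒢 H)
    (hfree : RA.Free) (hproper : RA.Proper) :
    T2Space (Quotient RA.setoid) ∧ LocallyCompactSpace (Quotient RA.setoid) ∧
    ∃ Q : TopGroupoid (Quotient RA.setoid),
      Q.unit = Quotient.mk RA.setoid '' 𝒢.unit ∧
      (∀ x : Γ, Q.rng (Quotient.mk RA.setoid x) = Quotient.mk RA.setoid (𝒢.rng x)) ∧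
      (∀ x : Γ, Q.src (Quotient.mk RA.setoid x) = Quotient.mk RA.setoid (𝒢.src x)) ∧
      (∀ x y : Γ, 𝒢.src x = 𝒢.rng y →
        Q.mul (Quotient.mk RA.setoid x) (Quotient.mk RA.setoid y)
          = Quotient.mk RA.setoid (𝒢.mul x y)) ∧
      (∀ x : Γ, Q.inv (Quotient.mk RA.setoid x) = Quotient.mk RA.setoid (𝒢.inv x)) :=
  ⟨hproper.t2Space_quotient, RA.isOpenQuotientMap_mk.locallyCompactSpace,
    RA.quotientGroupoid hfree hproper, rfl, fun _ => rfl, fun _ => rfl,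
    fun _ _ => hfree.quotMul_mk, fun _ => rfl⟩

/-- If `H` acts freely and properly on the right of a topological groupoid
`Γ` by automorphisms, then the orbit space `Γ/H` is locally compact Hausdorff and carries a
topological groupoid structure with units `Γ⁰/H`, `r(xH) = r(x)H`, `s(xH) = s(x)H`,
`(xH)(yH) = (xy)H` whenever `s(x) = r(y)`, and `(xH)⁻¹ = x⁻¹H`. -/
theorem quotient_groupoid_exists
    {Γ H : Type*} [TopologicalSpace Γ] [T2Space Γ] [LocallyCompactSpace Γ]
    [TopologicalSpace H] [Group H] [IsTopologicalGroup H] [T2Space H] [LocallyCompactSpace H]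
    (𝒢 : TopGroupoid Γ) (RA : GroupRightAction 𝒢 H)
    (hfree : RA.Free) (hproper : RA.Proper) :
    T2Space (Quotient RA.setoid) ∧ LocallyCompactSpace (Quotient RA.setoid) ∧
    ∃ Q : TopGroupoid (Quotient RA.setoid),
      Q.unit = Quotient.mk RA.setoid '' 𝒢.unit ∧
      (∀ x : Γ, Q.rng (Quotient.mk RA.setoid x) = Quotient.mk RA.setoid (𝒢.rng x)) ∧
      (∀ x : Γ, Q.src (Quotient.mk RA.setoid x) = Quotient.mk RA.setoid (𝒢.src x)) ∧
      (∀ x y : Γ, 𝒢.src x = 𝒢.rng y →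
        Q.mul (Quotient.mk RA.setoid x) (Quotient.mk RA.setoid y)
          = Quotient.mk RA.setoid (𝒢.mul x y)) ∧
      (∀ x : Γ, Q.inv (Quotient.mk RA.setoid x) = Quotient.mk RA.setoid (𝒢.inv x)) :=
  quotient_groupoid_exists_general 𝒢 RA hfree hproper
end
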